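/- If the theory of constraints CT is closed under negation and closed under existential quantification, then for all finite sets C, D ⊆ 𝒞 of constraints such that C ∪ D is consistent, there exist finite sets E₁,…,E_r of constraints such that {E₁,…,E_r} is a constraint split of C and D, i.e. cs(C,D) = {E₁,…,E_r} exists. -/

import Mathlib

namespace CABAFormal

/-- First-order terms over function symbols `F`; variables are natural numbers. -/
inductive Term (F : Type) : Type
  | var : ℕ → Term F
  | app : F → List (Term F) → Term F

namespace Term

variable {F D : Type}

mutual
  /-- Variables occurring in a term. -/
  def varsT : Term F → Set ℕ
    | .var n => {n}
    | .app _ args => varsL args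
  /-- Variables occurring in a list of terms. -/
  def varsL : List (Term F) → Set ℕ
    | [] => ∅
    | t :: ts => varsT t ∪ varsL ts
end

mutual
  /-- Application of a substitution to a term. -/
  def substT (σ : ℕ → Term F) : Term F → Term F
    | .var n => σ n
    | .app f args => .app f (substL σ args)
  def substL (σ : ℕ → Term F) : List (Term F) → List (Term F)
    | [] => []
    | t :: ts => substT σ t :: substL σ ts
end

mutual
  /-- Evaluation of a term in a structure with domain `D`. -/
  def evalT (funI : F → List D → D) (σ : ℕ → D) : Term F → D
    | .var n => σ n
    | .app f args => funI f (evalL funI σ args)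
  def evalL (funI : F → List D → D) (σ : ℕ → D) : List (Term F) → List D
    | [] => []
    | t :: ts => evalT funI σ t :: evalL funI σ ts
end

end Term

/-- Atomic formulas: a predicate symbol applied to a list of terms. -/
structure Atom (F P : Type) : Type where
  pred : P
  args : List (Term F)

namespace Atom
variable {F P : Type}
def vars (a : Atom F P) : Set ℕ := Term.varsL a.args
def subst (σ : ℕ → Term F) (a : Atom F P) : Atom F P := ⟨a.pred, Term.substL σ a.args⟩
def Ground (a : Atom F P) : Prop := a.vars = ∅
end Atom

/-- An inference rule with an atomic head and a list of atomic body sentences. -/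
structure Rule (F P : Type) : Type where
  head : Atom F P
  body : List (Atom F P)

namespace Rule
variable {F P : Type}
def subst (σ : ℕ → Term F) (r : Rule F P) : Rule F P := ⟨r.head.subst σ, r.body.map (Atom.subst σ)⟩
def vars (r : Rule F P) : Set ℕ := r.head.vars ∪ ⋃ b ∈ r.body, Atom.vars b
end Rule

def setVars {F P : Type} (S : Set (Atom F P)) : Set ℕ := ⋃ a ∈ S, a.vars

def substSet {F P : Type} (σ : ℕ → Term F) (S : Set (Atom F P)) : Set (Atom F P) :=
  Atom.subst σ '' S

/-- A variable renaming: a substitution given by a (finite-support) permutation of variables. -/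
def IsRenaming {F : Type} (ρ : ℕ → Term F) : Prop :=
  ∃ π : Equiv.Perm ℕ, {n | π n ≠ n}.Finite ∧ ρ = fun n => Term.var (π n)

/-- The substitution `{X/t}` sending the variables `xs` to the terms `ts` (componentwise). -/
def mkSubst {F : Type} (xs : List ℕ) (ts : List (Term F)) : ℕ → Term F :=
  fun n => ((xs.zip ts).lookup n).getD (Term.var n)

/-- Two assignments agree on a set of variables. -/
def Agree {D : Type} (σ σ' : ℕ → D) (V : Set ℕ) : Prop := ∀ x ∈ V, σ x = σ' x

/-- A set of atoms is predicate closed if together with `p(t)` it contains `p(t')`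
for every tuple `t'` of terms of the same length. -/
def PredClosed {F P : Type} (L : Set (Atom F P)) : Prop :=
  ∀ (p : P) (ts ts' : List (Term F)), Atom.mk p ts ∈ L → ts'.length = ts.length →
    Atom.mk p ts' ∈ L

/-- A (flat) Constrained Assumption-Based Argumentation framework, together with the
semantics of its theory of constraints (an algebraic structure with domain `D`,
in which a designated predicate `eqP` is interpreted as identity, as required by
the Clark Equality Theory). -/
structure CABA (F P D : Type) : Type where
  /-- the atomic language `L_c` -/
  Lc : Set (Atom F P)
  /-- the atomic constraints `𝒞 ⊆ L_c` -/
  Con : Set (Atom F P)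
  /-- the inference rules `ℛ` -/
  Rules : Set (Rule F P)
  /-- the assumptions `𝒜` -/
  Asm : Set (Atom F P)
  /-- the contrary predicate map: the contrary of `p(t)` is `contrPred p (t)` -/
  contrPred : P → P
  /-- interpretation of function symbols in the structure underlying `CT` -/
  funI : F → List D → D
  /-- interpretation of predicate symbols in the structure underlying `CT` -/
  predI : P → List D → Prop
  /-- the equality predicate of `CT` -/
  eqP : P
  dom_nonempty : Nonempty D
  ground_term : ∃ t : Term F, Term.varsT t = ∅
  con_sub : Con ⊆ Lc
  lc_closed : PredClosed Lc
  con_closed : PredClosed Con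
  asm_closed : PredClosed Asm
  rules_lang : ∀ r ∈ Rules, (r.head ∈ Lc ∧ r.head ∉ Con) ∧ ∀ b ∈ r.body, b ∈ Lc
  /-- rules are in normalised form: heads are predicates applied to distinct variables -/
  rules_norm : ∀ r ∈ Rules, ∃ xs : List ℕ, xs.Nodup ∧ r.head.args = xs.map Term.var
  asm_sub : ∀ a ∈ Asm, a ∈ Lc ∧ a ∉ Con
  asm_nonempty : Asm.Nonempty
  contr_wf : ∀ a ∈ Asm, Atom.mk (contrPred a.pred) a.args ∈ Lc ∧
    Atom.mk (contrPred a.pred) a.args ∉ Con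
  /-- flatness: assumptions are not heads of rules -/
  flat : ∀ r ∈ Rules, r.head ∉ Asm
  eq_con : ∀ t u : Term F, Atom.mk eqP [t, u] ∈ Con
  eq_interp : ∀ a b : D, predI eqP [a, b] ↔ a = b

namespace CABA

variable {F P D : Type}

/-- The contrary of an assumption. -/
def contrary (fc : CABA F P D) (a : Atom F P) : Atom F P := ⟨fc.contrPred a.pred, a.args⟩

/-- Truth of an atom under a variable assignment, in the structure underlying `CT`. -/
def Holds (fc : CABA F P D) (σ : ℕ → D) (a : Atom F P) : Prop :=
  fc.predI a.pred (Term.evalL fc.funI σ a.args)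

/-- `CT ⊨ a` for an atom `a` (validity of its universal closure). -/
def Valid (fc : CABA F P D) (a : Atom F P) : Prop := ∀ σ : ℕ → D, fc.Holds σ a

/-- A set `C` of constraints is consistent: `CT ⊨ ∃(⋀C)`. -/
def ConsistentSet (fc : CABA F P D) (C : Set (Atom F P)) : Prop :=
  ∃ σ : ℕ → D, ∀ c ∈ C, fc.Holds σ c

/-- `CT ⊨ t = u` (for ground terms this is independent of the assignment). -/
def termEq (fc : CABA F P D) (t u : Term F) : Prop :=
  ∀ σ : ℕ → D, Term.evalT fc.funI σ t = Term.evalT fc.funI σ u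

/-- `CT ⊨ p(t) ↔ p(t')`, i.e. same predicate and `CT ⊨ t = t'` componentwise. -/
def atomEq (fc : CABA F P D) (a b : Atom F P) : Prop :=
  a.pred = b.pred ∧ List.Forall₂ fc.termEq a.args b.args

/-- `CT ⊨ ⋀A ↔ ⋀A'` for sets of ground atoms: each atom of each set is `CT`-equivalent
to an atom of the other set. -/
def asmSetEq (fc : CABA F P D) (A B : Set (Atom F P)) : Prop :=
  (∀ a ∈ A, ∃ b ∈ B, fc.atomEq a b) ∧ (∀ b ∈ B, ∃ a ∈ A, fc.atomEq a b)

end CABA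

/-- `TightFor fc C A R s` holds iff there is a tight constrained argument (a finite tree)
for claim `s`, supported exactly by the constraints `C`, assumptions `A` and rules `R`:
every non-leaf node `p(t)` has as children the instantiated body atoms of exactly one
renamed-apart (normalised) rule of `R` with head `p(X)` and `ϑ = {X/t}`, and every leaf
is a constraint in `C`, an assumption in `A`, or `true`. -/
inductive TightFor {F P D : Type} (fc : CABA F P D) :
    Set (Atom F P) → Set (Atom F P) → Set (Rule F P) → Atom F P → Prop
  | asm {a : Atom F P} (ha : a ∈ fc.Asm) : TightFor fc ∅ {a} ∅ a
  | node {p : P} {ts : List (Term F)} {r rv : Rule F P} {xs : List ℕ}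
      {CS AS : ℕ → Set (Atom F P)} {RS : ℕ → Set (Rule F P)}
      (hr : r ∈ fc.Rules)
      (hvar : ∃ ρ : ℕ → Term F, IsRenaming ρ ∧ rv = r.subst ρ)
      (hhead : rv.head = ⟨p, xs.map Term.var⟩)
      (hnodup : xs.Nodup)
      (hlen : xs.length = ts.length)
      (hfresh : (Rule.vars rv \ {n | n ∈ xs}) ∩ Term.varsL ts = ∅)
      (hcon : ∀ i (hi : i < rv.body.length),
        (rv.body.get ⟨i, hi⟩).subst (mkSubst xs ts) ∈ fc.Con →
          CS i = {(rv.body.get ⟨i, hi⟩).subst (mkSubst xs ts)} ∧ AS i = ∅ ∧ RS i = ∅)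
      (hasm : ∀ i (hi : i < rv.body.length),
        (rv.body.get ⟨i, hi⟩).subst (mkSubst xs ts) ∉ fc.Con →
        (rv.body.get ⟨i, hi⟩).subst (mkSubst xs ts) ∈ fc.Asm →
          CS i = ∅ ∧ AS i = {(rv.body.get ⟨i, hi⟩).subst (mkSubst xs ts)} ∧ RS i = ∅)
      (hder : ∀ i (hi : i < rv.body.length),
        (rv.body.get ⟨i, hi⟩).subst (mkSubst xs ts) ∉ fc.Con →
        (rv.body.get ⟨i, hi⟩).subst (mkSubst xs ts) ∉ fc.Asm →
          TightFor fc (CS i) (AS i) (RS i) ((rv.body.get ⟨i, hi⟩).subst (mkSubst xs ts)))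
      (hsep : ∀ i j (hi : i < rv.body.length) (hj : j < rv.body.length), i ≠ j →
        (setVars (CS i ∪ AS i) ∩ setVars (CS j ∪ AS j)) ⊆
          Atom.vars ((rv.body.get ⟨i, hi⟩).subst (mkSubst xs ts)) ∩
            Atom.vars ((rv.body.get ⟨j, hj⟩).subst (mkSubst xs ts)))
      (hsep' : ∀ i (hi : i < rv.body.length),
        setVars (CS i ∪ AS i) ∩ (Term.varsL ts ∪ Rule.vars rv) ⊆
          Atom.vars ((rv.body.get ⟨i, hi⟩).subst (mkSubst xs ts))) :
      TightFor fc (⋃ i ∈ Finset.range rv.body.length, CS i)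
        (⋃ i ∈ Finset.range rv.body.length, AS i)
        ({r} ∪ ⋃ i ∈ Finset.range rv.body.length, RS i)
        ⟨p, ts⟩

/-- A constrained argument `C ∪ A ⊢_R s`, represented by its support and claim. -/
structure CArgument (F P : Type) : Type where
  con : Set (Atom F P)
  asm : Set (Atom F P)
  rules : Set (Rule F P)
  claim : Atom F P

namespace CArgument
variable {F P : Type}
def vars (α : CArgument F P) : Set ℕ := setVars α.con ∪ setVars α.asm ∪ α.claim.vars
def Ground (α : CArgument F P) : Prop := α.vars = ∅
def subst (σ : ℕ → Term F) (α : CArgument F P) : CArgument F P :=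
  ⟨substSet σ α.con, substSet σ α.asm, α.rules, α.claim.subst σ⟩
end CArgument

section Args

variable {F P D : Type}

/-- A tight constrained argument (with consistent constraint set). -/
def IsTightArg (fc : CABA F P D) (α : CArgument F P) : Prop :=
  TightFor fc α.con α.asm α.rules α.claim ∧ fc.ConsistentSet α.con

/-- The set `TCArg` of all tight constrained arguments. -/
def TCArg (fc : CABA F P D) : Set (CArgument F P) := {α | IsTightArg fc α}

/-- Most general: the claim is of the form `p(X)` for a tuple of distinct variables. -/
def IsMostGeneral (α : CArgument F P) : Prop :=
  ∃ xs : List ℕ, xs.Nodup ∧ α.claim.args = xs.map Term.var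

/-- The set `MGCArg` of all most general constrained arguments. -/
def MGCArg (fc : CABA F P D) : Set (CArgument F P) := {α | IsTightArg fc α ∧ IsMostGeneral α}

/-- `α'` is a constrained instance (via `ϑ` and `D`) of `α`. -/
def ConstrainedInstanceOf (fc : CABA F P D) (α' α : CArgument F P) : Prop :=
  ∃ (ϑ : ℕ → Term F) (Dc : Set (Atom F P)), Dc ⊆ fc.Con ∧
    α'.con = substSet ϑ α.con ∪ Dc ∧ α'.asm = substSet ϑ α.asm ∧
    α'.rules = α.rules ∧ α'.claim = α.claim.subst ϑ ∧ fc.ConsistentSet α'.con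

/-- The set `CArg` of all constrained arguments. -/
def CArg (fc : CABA F P D) : Set (CArgument F P) :=
  {α | ∃ β ∈ TCArg fc, ConstrainedInstanceOf fc α β}

/-- `GrCInst α`: the ground constrained instances of `α`. -/
def GrCInst (fc : CABA F P D) (α : CArgument F P) : Set (CArgument F P) :=
  {α' | ConstrainedInstanceOf fc α' α ∧ α'.Ground}

/-- `GrCInst Γ` for a set `Γ` of constrained arguments. -/
def GrCInstSet (fc : CABA F P D) (Γ : Set (CArgument F P)) : Set (CArgument F P) :=
  ⋃ α ∈ Γ, GrCInst fc α

/-- Equality of ground constrained arguments modulo ground constraints. -/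
def EqModGC (fc : CABA F P D) (α β : CArgument F P) : Prop :=
  fc.asmSetEq α.asm β.asm ∧ fc.atomEq α.claim β.claim

/-- Equality of sets of ground constrained arguments modulo ground constraints. -/
def SetEqModGC (fc : CABA F P D) (S T : Set (CArgument F P)) : Prop :=
  (∀ x ∈ S, ∃ y ∈ T, EqModGC fc x y) ∧ (∀ y ∈ T, ∃ x ∈ S, EqModGC fc x y)

/-- The equivalence relation `≡` on sets of constrained arguments: the smallest
equivalence relation identifying ground arguments equal modulo ground constraints,
identifying `{α}` with `GrCInst α`, and a congruence for union. -/
inductive AEquiv (fc : CABA F P D) : Set (CArgument F P) → Set (CArgument F P) → Prop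
  | refl (Γ : Set (CArgument F P)) : AEquiv fc Γ Γ
  | symm {Γ Δ : Set (CArgument F P)} : AEquiv fc Γ Δ → AEquiv fc Δ Γ
  | trans {Γ Δ Θ : Set (CArgument F P)} : AEquiv fc Γ Δ → AEquiv fc Δ Θ → AEquiv fc Γ Θ
  | groundEq {α β : CArgument F P} (hα : α ∈ CArg fc) (hβ : β ∈ CArg fc)
      (gα : α.Ground) (gβ : β.Ground) (h : EqModGC fc α β) : AEquiv fc {α} {β}
  | grInst {α : CArgument F P} (hα : α ∈ CArg fc) : AEquiv fc {α} (GrCInst fc α)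
  | unionCongr (Γ : Set (CArgument F P)) {Δ₁ Δ₂ : Set (CArgument F P)} :
      AEquiv fc Δ₁ Δ₂ → AEquiv fc (Γ ∪ Δ₁) (Γ ∪ Δ₂)

/-- `α` fully attacks `β` (Definition of full attack, including the case where the
claim of `α` and the attacked assumption of `β` have different argument tuples,
handled via fresh linking variables). -/
def FullAttacks (fc : CABA F P D) (α β : CArgument F P) : Prop :=
  ∃ a ∈ β.asm, α.claim.pred = fc.contrPred a.pred ∧
    ((α.claim.args = a.args ∧
        ∀ σ : ℕ → D, (∀ d ∈ β.con, fc.Holds σ d) →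
          ∃ σ' : ℕ → D, Agree σ' σ α.claim.vars ∧ ∀ c ∈ α.con, fc.Holds σ' c) ∨
      (α.claim.args ≠ a.args ∧
        ∀ σ : ℕ → D, (∀ d ∈ β.con, fc.Holds σ d) →
          ∃ σ' : ℕ → D,
            List.Forall₂ (fun t u => Term.evalT fc.funI σ' t = Term.evalT fc.funI σ u)
              α.claim.args a.args ∧
            ∀ c ∈ α.con, fc.Holds σ' c))

/-- `α` partially attacks `β`. -/
def PartialAttacks (fc : CABA F P D) (α β : CArgument F P) : Prop :=
  ∃ a ∈ β.asm, α.claim.pred = fc.contrPred a.pred ∧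
    ((α.claim.args = a.args ∧
        ∃ σ₁ σ₂ : ℕ → D, Agree σ₁ σ₂ α.claim.vars ∧
          (∀ c ∈ α.con, fc.Holds σ₁ c) ∧ ∀ d ∈ β.con, fc.Holds σ₂ d) ∨
      (α.claim.args ≠ a.args ∧
        ∃ σ₁ σ₂ : ℕ → D,
          List.Forall₂ (fun t u => Term.evalT fc.funI σ₁ t = Term.evalT fc.funI σ₂ u)
            α.claim.args a.args ∧
          (∀ c ∈ α.con, fc.Holds σ₁ c) ∧ ∀ d ∈ β.con, fc.Holds σ₂ d))

/-- Attack between ground constrained arguments, viewed as arguments of `Ground(F_c)`. -/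
def GAttacks (fc : CABA F P D) (α β : CArgument F P) : Prop :=
  ∃ a ∈ β.asm, α.claim = fc.contrary a

/-- `Γ ⊆ CArg` is a conflict-free extension of `F_c`:
`GrCInst(Γ)` is conflict-free in `Ground(F_c)`. -/
def ConflictFreeExt (fc : CABA F P D) (Γ : Set (CArgument F P)) : Prop :=
  ∀ α ∈ GrCInstSet fc Γ, ∀ β ∈ GrCInstSet fc Γ, ¬ GAttacks fc α β

/-- `Γ ⊆ CArg` is an admissible extension of `F_c`. -/
def AdmissibleExt (fc : CABA F P D) (Γ : Set (CArgument F P)) : Prop :=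
  ConflictFreeExt fc Γ ∧
    ∀ α ∈ GrCInstSet fc Γ, ∀ β ∈ GrCInstSet fc (CArg fc),
      GAttacks fc β α → ∃ γ ∈ GrCInstSet fc Γ, GAttacks fc γ β

/-- `Γ ⊆ CArg` is a stable extension of `F_c`. -/
def StableExt (fc : CABA F P D) (Γ : Set (CArgument F P)) : Prop :=
  ConflictFreeExt fc Γ ∧
    ∀ β ∈ GrCInstSet fc (CArg fc), β ∉ GrCInstSet fc Γ →
      ∃ α ∈ GrCInstSet fc Γ, GAttacks fc α β

/-- Non-ground conflict-freeness. -/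
def NGCF (fc : CABA F P D) (S : Set (CArgument F P)) : Prop :=
  ¬ ∃ α ∈ S, ∃ β ∈ S, PartialAttacks fc α β

/-- The set of constrained arguments fully attacked by some member of `S`. -/
def FAtt (fc : CABA F P D) (S : Set (CArgument F P)) : Set (CArgument F P) :=
  {β | β ∈ CArg fc ∧ ∃ α ∈ S, FullAttacks fc α β}

/-- A set of constrained arguments is non-overlapping: partial and full attacks coincide. -/
def NonOverlapping (fc : CABA F P D) (Δ : Set (CArgument F P)) : Prop :=
  ∀ α ∈ Δ, ∀ β ∈ Δ, (PartialAttacks fc α β ↔ FullAttacks fc α β)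

/-- Two constrained arguments have common constrained instances. -/
def CommonCI (fc : CABA F P D) (α β : CArgument F P) : Prop :=
  ∃ α' ∈ GrCInst fc α, ∃ β' ∈ GrCInst fc β, EqModGC fc α' β'

/-- A set of constrained arguments is instance-disjoint. -/
def InstanceDisjoint (fc : CABA F P D) (Δ : Set (CArgument F P)) : Prop :=
  ∀ α ∈ Δ, ∀ β ∈ Δ, α ≠ β → ¬ CommonCI fc α β

/-- The set of equality constraints `{X = t}` linking variables `xs` to terms `ts`. -/
def eqAtoms (fc : CABA F P D) (xs : List ℕ) (ts : List (Term F)) : Set (Atom F P) :=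
  {a | ∃ pr ∈ (xs.map Term.var).zip ts, a = Atom.mk fc.eqP [pr.1, pr.2]}

end Args

/-- A rule of a generic (ground) language. -/
structure GRule (S : Type) : Type where
  head : S
  body : List S

/-- A 4-tuple `⟨L, ℛ, 𝒜, ⎯⟩` as candidate ABA framework. -/
structure ABAF (S : Type) : Type where
  lang : Set S
  rules : Set (GRule S)
  asm : Set S
  contrary : S → S

/-- The 4-tuple is an ABA framework: rules are over the language, the assumptions are a
non-empty subset of the language, and the contrary map is total from assumptions into
the language. -/
def ABAF.IsABA {S : Type} (fr : ABAF S) : Prop :=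
  (∀ r ∈ fr.rules, r.head ∈ fr.lang ∧ ∀ b ∈ r.body, b ∈ fr.lang) ∧
    fr.asm ⊆ fr.lang ∧ fr.asm.Nonempty ∧ ∀ a ∈ fr.asm, fr.contrary a ∈ fr.lang

def Rule.toGRule {F P : Type} (r : Rule F P) : GRule (Atom F P) := ⟨r.head, r.body⟩

/-- The grounding `Ground(F_c)` of a CABA framework. -/
def groundABA {F P D : Type} (fc : CABA F P D) : ABAF (Atom F P) where
  lang := {a | a ∈ fc.Lc ∧ a.Ground}
  rules := {gr | (∃ r ∈ fc.Rules, ∃ ϑ : ℕ → Term F, gr = (r.subst ϑ).toGRule ∧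
        (r.subst ϑ).head.Ground ∧ ∀ b ∈ (r.subst ϑ).body, b.Ground) ∨
      (∃ c, c ∈ fc.Con ∧ c.Ground ∧ fc.Valid c ∧ gr = ⟨c, []⟩)}
  asm := {a | a ∈ fc.Asm ∧ a.Ground}
  contrary := fc.contrary

/-- An argument `A ⊢_R s` in a (flat) ABA framework: a finite tree with root the claim,
whose non-leaf nodes have as children the body of exactly one rule of `R` with matching
head, and whose leaves are assumptions in `A` or `true`. -/
inductive ABADeriv {S : Type} (fr : ABAF S) : Set S → Set (GRule S) → S → Prop
  | asm {a : S} (ha : a ∈ fr.asm) : ABADeriv fr {a} ∅ a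
  | node {r : GRule S} {AS : ℕ → Set S} {RS : ℕ → Set (GRule S)}
      (hr : r ∈ fr.rules)
      (hasm : ∀ i (hi : i < r.body.length), r.body.get ⟨i, hi⟩ ∈ fr.asm →
        AS i = {r.body.get ⟨i, hi⟩} ∧ RS i = ∅)
      (hder : ∀ i (hi : i < r.body.length), r.body.get ⟨i, hi⟩ ∉ fr.asm →
        ABADeriv fr (AS i) (RS i) (r.body.get ⟨i, hi⟩)) :
      ABADeriv fr (⋃ i ∈ Finset.range r.body.length, AS i)
        ({r} ∪ ⋃ i ∈ Finset.range r.body.length, RS i) r.head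

section Split

variable {F P D : Type}

/-- Two sets of constraints are mutually exclusive: `CT ⊨ ¬∃(e₁ ∧ e₂)`. -/
def MutuallyExclusive (fc : CABA F P D) (E₁ E₂ : Set (Atom F P)) : Prop :=
  ¬ ∃ σ : ℕ → D, (∀ e ∈ E₁, fc.Holds σ e) ∧ ∀ e ∈ E₂, fc.Holds σ e

/-- `Es` is a constraint split `cs(C,D)` of the sets `C` and `D` of constraints. -/
def IsConstraintSplit (fc : CABA F P D) (C Dc : Set (Atom F P))
    (Es : List (Set (Atom F P))) : Prop :=
  (∀ E ∈ Es, E ⊆ fc.Con ∧ E.Finite) ∧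
  (∀ σ : ℕ → D,
    ((¬ ∃ σ' : ℕ → D, Agree σ' σ (setVars C ∩ setVars Dc) ∧ ∀ c ∈ C, fc.Holds σ' c) ∧
        ∀ d ∈ Dc, fc.Holds σ d) ↔
      ∃ E ∈ Es, ∀ e ∈ E, fc.Holds σ e) ∧
  (∀ E ∈ Es, fc.ConsistentSet E) ∧
  Es.Pairwise (MutuallyExclusive fc)

/-- `CT` is closed under negation. -/
def ClosedUnderNeg (fc : CABA F P D) : Prop :=
  ∀ c ∈ fc.Con, ∃ ds : List (Atom F P), (∀ d ∈ ds, d ∈ fc.Con) ∧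
    (∀ σ : ℕ → D, (¬ fc.Holds σ c) ↔ ∃ d ∈ ds, fc.Holds σ d) ∧
    ds.Pairwise (fun d₁ d₂ => ¬ ∃ σ : ℕ → D, fc.Holds σ d₁ ∧ fc.Holds σ d₂)

/-- `CT` is closed under existential quantification. -/
def ClosedUnderEx (fc : CABA F P D) : Prop :=
  ∀ C : Set (Atom F P), C ⊆ fc.Con → C.Finite → ∀ V : Set ℕ,
    ∃ Es : List (Set (Atom F P)), (∀ E ∈ Es, E ⊆ fc.Con ∧ E.Finite) ∧
      ∀ σ : ℕ → D, (∃ σ' : ℕ → D, Agree σ' σ V ∧ ∀ c ∈ C, fc.Holds σ' c) ↔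
        ∃ E ∈ Es, ∀ e ∈ E, fc.Holds σ e

/-- `Bs` is an output of the splitting operation `split_ci(α,β)`. -/
def IsSplitCI (fc : CABA F P D) (α β : CArgument F P) (Bs : List (CArgument F P)) : Prop :=
  ∃ (C A : Set (Atom F P)) (R R' : Set (Rule F P)) (s : Atom F P)
      (Dc : Set (Atom F P)) (Es : List (Set (Atom F P))),
    C.Finite ∧ Dc.Finite ∧ C ⊆ fc.Con ∧ Dc ⊆ fc.Con ∧
    AEquiv fc {α} {CArgument.mk C A R s} ∧ AEquiv fc {β} {CArgument.mk Dc A R' s} ∧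
    setVars C ∩ setVars Dc ⊆ setVars A ∪ s.vars ∧
    fc.ConsistentSet (C ∪ Dc) ∧
    IsConstraintSplit fc C Dc Es ∧
    Bs = Es.map fun E => CArgument.mk E A R' s

/-- `Bs` is an output of the splitting operation `split_pa(α,β)`. -/
def IsSplitPA (fc : CABA F P D) (α β : CArgument F P) (Bs : List (CArgument F P)) : Prop :=
  ∃ (C A₁ A₂ : Set (Atom F P)) (R₁ R₂ : Set (Rule F P)) (s₁ s₂ a : Atom F P)
      (Dc : Set (Atom F P)) (Es : List (Set (Atom F P))),
    C.Finite ∧ Dc.Finite ∧ C ⊆ fc.Con ∧ Dc ⊆ fc.Con ∧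
    AEquiv fc {α} {CArgument.mk C A₁ R₁ s₁} ∧ AEquiv fc {β} {CArgument.mk Dc A₂ R₂ s₂} ∧
    a ∈ A₂ ∧ s₁ = fc.contrary a ∧
    setVars C ∩ setVars Dc ⊆ s₁.vars ∧
    fc.ConsistentSet (C ∪ Dc) ∧
    IsConstraintSplit fc C Dc Es ∧
    Bs = CArgument.mk (C ∪ Dc) A₂ R₂ s₂ :: (Es.map fun E => CArgument.mk E A₂ R₂ s₂)

/-- One step of the Argument Splitting procedure. -/
inductive SplitStep (fc : CABA F P D) :
    Set (CArgument F P) → Set (CArgument F P) → Prop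
  | ci {Δ : Set (CArgument F P)} {α β : CArgument F P} {Bs : List (CArgument F P)}
      (hα : α ∈ Δ) (hβ : β ∈ Δ) (h : CommonCI fc α β) (hs : IsSplitCI fc α β Bs) :
      SplitStep fc Δ ((Δ \ {β}) ∪ {b | b ∈ Bs})
  | pa {Δ : Set (CArgument F P)} {α β : CArgument F P} {Bs : List (CArgument F P)}
      (hα : α ∈ Δ) (hβ : β ∈ Δ) (hp : PartialAttacks fc α β) (hf : ¬ FullAttacks fc α β)
      (hs : IsSplitPA fc α β Bs) :
      SplitStep fc Δ ((Δ \ {β}) ∪ {b | b ∈ Bs})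

end Split

end CABAFormal

/-!
To split off the solutions of `¬∃_{-V} ⋀C ∧ ⋀D`, first write `∃_{-V} ⋀C` as a disjunction
`e₁ ∨ … ∨ eₖ` of conjunctions of constraints (closure under existential quantification).
Closure under negation writes each `¬eᵢ` as a disjunction of pairwise exclusive conjunctions,
using `¬(c ∧ e) ↔ ¬c ∨ (c ∧ ¬e)` to keep the disjuncts exclusive. Multiplying out the
conjunction `¬e₁ ∧ … ∧ ¬eₖ ∧ ⋀D` keeps the disjuncts exclusive, and the inconsistent ones can
be dropped.
-/

namespace CABAFormal

variable {F P D : Type} (fc : CABA F P D)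

structure IsDisjointDNF (φ : (ℕ → D) → Prop) (Es : List (Set (Atom F P))) : Prop where
  subset_con : ∀ E ∈ Es, E ⊆ fc.Con
  finite : ∀ E ∈ Es, E.Finite
  iff : ∀ σ, φ σ ↔ ∃ E ∈ Es, ∀ e ∈ E, fc.Holds σ e
  pairwise : Es.Pairwise (MutuallyExclusive fc)

variable {fc}

theorem MutuallyExclusive.mono {E₁ E₂ E₁' E₂' : Set (Atom F P)}
    (h : MutuallyExclusive fc E₁ E₂) (h₁ : E₁ ⊆ E₁') (h₂ : E₂ ⊆ E₂') :
    MutuallyExclusive fc E₁' E₂' := by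
  rintro ⟨σ, hσ₁, hσ₂⟩
  exact h ⟨σ, fun e he => hσ₁ e (h₁ he), fun e he => hσ₂ e (h₂ he)⟩

namespace IsDisjointDNF

variable {φ ψ : (ℕ → D) → Prop} {Gs Hs : List (Set (Atom F P))}

theorem congr (h : IsDisjointDNF fc φ Gs) (hψ : ∀ σ, ψ σ ↔ φ σ) : IsDisjointDNF fc ψ Gs :=
  ⟨h.subset_con, h.finite, fun σ => (hψ σ).trans (h.iff σ), h.pairwise⟩

theorem mutuallyExclusive (h₁ : IsDisjointDNF fc φ Gs) (h₂ : IsDisjointDNF fc ψ Hs)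
    (hφψ : ∀ σ, φ σ → ¬ ψ σ) {G H : Set (Atom F P)} (hG : G ∈ Gs) (hH : H ∈ Hs) :
    MutuallyExclusive fc G H := by
  rintro ⟨σ, hσG, hσH⟩
  exact hφψ σ ((h₁.iff σ).2 ⟨G, hG, hσG⟩) ((h₂.iff σ).2 ⟨H, hH, hσH⟩)

theorem or (h₁ : IsDisjointDNF fc φ Gs) (h₂ : IsDisjointDNF fc ψ Hs)
    (hφψ : ∀ σ, φ σ → ¬ ψ σ) : IsDisjointDNF fc (fun σ => φ σ ∨ ψ σ) (Gs ++ Hs) where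
  subset_con E hE := (List.mem_append.1 hE).elim (h₁.subset_con E) (h₂.subset_con E)
  finite E hE := (List.mem_append.1 hE).elim (h₁.finite E) (h₂.finite E)
  iff σ := by
    simp only [h₁.iff σ, h₂.iff σ, List.mem_append, or_and_right, exists_or]
  pairwise := List.pairwise_append.2
    ⟨h₁.pairwise, h₂.pairwise, fun _ hG _ hH => h₁.mutuallyExclusive h₂ hφψ hG hH⟩

theorem and (h₁ : IsDisjointDNF fc φ Gs) (h₂ : IsDisjointDNF fc ψ Hs) :
    IsDisjointDNF fc (fun σ => φ σ ∧ ψ σ) (Gs.flatMap fun G => Hs.map (G ∪ ·)) where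
  subset_con E hE := by
    obtain ⟨G, hG, H, hH, rfl⟩ := by simpa using hE
    exact Set.union_subset (h₁.subset_con G hG) (h₂.subset_con H hH)
  finite E hE := by
    obtain ⟨G, hG, H, hH, rfl⟩ := by simpa using hE
    exact (h₁.finite G hG).union (h₂.finite H hH)
  iff σ := by
    simp only [h₁.iff σ, h₂.iff σ, List.mem_flatMap, List.mem_map]
    constructor
    · rintro ⟨⟨G, hG, hσG⟩, H, hH, hσH⟩
      exact ⟨G ∪ H, ⟨G, hG, H, hH, rfl⟩, fun e he => he.elim (hσG e) (hσH e)⟩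
    · rintro ⟨_, ⟨G, hG, H, hH, rfl⟩, hσ⟩
      exact ⟨⟨G, hG, fun e he => hσ e (Or.inl he)⟩, H, hH, fun e he => hσ e (Or.inr he)⟩
  pairwise := by
    refine List.pairwise_flatMap.2 ⟨fun G _ => ?_, h₁.pairwise.imp ?_⟩
    · exact List.pairwise_map.2 (h₂.pairwise.imp fun h => h.mono
        Set.subset_union_right Set.subset_union_right)
    · intro G G' hGG' _ hK _ hK'
      obtain ⟨H, -, rfl⟩ := List.mem_map.1 hK
      obtain ⟨H', -, rfl⟩ := List.mem_map.1 hK'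
      exact hGG'.mono Set.subset_union_left Set.subset_union_left

theorem exists_consistent (h : IsDisjointDNF fc φ Gs) :
    ∃ Hs, IsDisjointDNF fc φ Hs ∧ ∀ E ∈ Hs, fc.ConsistentSet E := by
  classical
  refine ⟨Gs.filter fun E => fc.ConsistentSet E, ⟨?_, ?_, fun σ => ?_, h.pairwise.filter _⟩, ?_⟩
  · exact fun E hE => h.subset_con E (List.mem_of_mem_filter hE)
  · exact fun E hE => h.finite E (List.mem_of_mem_filter hE)
  · rw [h.iff σ]
    refine ⟨fun ⟨E, hE, hσ⟩ => ⟨E, List.mem_filter.2 ⟨hE, decide_eq_true ⟨σ, hσ⟩⟩, hσ⟩,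
      fun ⟨E, hE, hσ⟩ => ⟨E, List.mem_of_mem_filter hE, hσ⟩⟩
  · exact fun E hE => of_decide_eq_true (List.mem_filter.1 hE).2

end IsDisjointDNF

theorem isDisjointDNF_true : IsDisjointDNF fc (fun _ => True) [∅] :=
  ⟨by simp, by simp, by simp, List.pairwise_singleton _ _⟩

theorem isDisjointDNF_forall_mem {E : Set (Atom F P)} (hE : E ⊆ fc.Con) (hEf : E.Finite) :
    IsDisjointDNF fc (fun σ => ∀ e ∈ E, fc.Holds σ e) [E] :=
  ⟨by simpa using hE, by simpa using hEf, by simp, List.pairwise_singleton _ _⟩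

theorem exists_isDisjointDNF_not_holds (hneg : ClosedUnderNeg fc) {c : Atom F P}
    (hc : c ∈ fc.Con) : ∃ Gs, IsDisjointDNF fc (fun σ => ¬ fc.Holds σ c) Gs := by
  obtain ⟨ds, hds, hiff, hexcl⟩ := hneg c hc
  refine ⟨ds.map ({·}), ⟨?_, ?_, fun σ => ?_, ?_⟩⟩
  · simpa using hds
  · simp
  · simpa using hiff σ
  · refine List.pairwise_map.2 (hexcl.imp fun h => ?_)
    simpa [MutuallyExclusive] using h

theorem exists_isDisjointDNF_not_forall_mem (hneg : ClosedUnderNeg fc) {E : Set (Atom F P)}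
    (hE : E ⊆ fc.Con) (hEf : E.Finite) :
    ∃ Gs, IsDisjointDNF fc (fun σ => ¬ ∀ e ∈ E, fc.Holds σ e) Gs := by
  induction E, hEf using Set.Finite.induction_on with
  | empty => exact ⟨[], ⟨by simp, by simp, by simp, List.Pairwise.nil⟩⟩
  | @insert c E _ _ ih =>
    obtain ⟨hc, hE⟩ := Set.insert_subset_iff.1 hE
    obtain ⟨Gs, hGs⟩ := exists_isDisjointDNF_not_holds hneg hc
    obtain ⟨Hs, hHs⟩ := ih hE
    have hcHs := (isDisjointDNF_forall_mem (Set.singleton_subset_iff.2 hc)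
      (Set.finite_singleton c)).and hHs
    refine ⟨_, (hGs.or hcHs fun σ hσ h => hσ (h.1 c rfl)).congr fun σ => ?_⟩
    simp only [Set.forall_mem_insert, Set.mem_singleton_iff, forall_eq]
    tauto

theorem exists_isDisjointDNF_forall_mem_list {ι : Type*} (l : List ι)
    (φ : ι → (ℕ → D) → Prop) (h : ∀ i ∈ l, ∃ Gs, IsDisjointDNF fc (φ i) Gs) :
    ∃ Gs, IsDisjointDNF fc (fun σ => ∀ i ∈ l, φ i σ) Gs := by
  induction l with
  | nil => exact ⟨_, isDisjointDNF_true.congr fun σ => by simp⟩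
  | cons i l ih =>
    obtain ⟨Gs, hGs⟩ := h i List.mem_cons_self
    obtain ⟨Hs, hHs⟩ := ih fun j hj => h j (List.mem_cons_of_mem _ hj)
    exact ⟨_, (hGs.and hHs).congr fun σ => List.forall_mem_cons⟩

theorem exists_isDisjointDNF_not_exists (hneg : ClosedUnderNeg fc)
    {Es : List (Set (Atom F P))} (hEs : ∀ E ∈ Es, E ⊆ fc.Con ∧ E.Finite) :
    ∃ Gs, IsDisjointDNF fc (fun σ => ¬ ∃ E ∈ Es, ∀ e ∈ E, fc.Holds σ e) Gs := by
  obtain ⟨Gs, hGs⟩ := exists_isDisjointDNF_forall_mem_list Es _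
    fun E hE => exists_isDisjointDNF_not_forall_mem hneg (hEs E hE).1 (hEs E hE).2
  exact ⟨Gs, hGs.congr fun σ => by simp⟩

end CABAFormal

open CABAFormal in
/-- If `CT` is closed under negation and existential quantification, then for all
finite sets `C, D ⊆ 𝒞` of constraints with `C ∪ D` consistent, a constraint split
`cs(C,D)` exists. -/
theorem constraint_split_exists {F P D : Type} (fc : CABA F P D)
    (hneg : ClosedUnderNeg fc) (hex : ClosedUnderEx fc)
    (C Dc : Set (Atom F P)) (hC : C ⊆ fc.Con) (hD : Dc ⊆ fc.Con)
    (hCf : C.Finite) (hDf : Dc.Finite) (hcons : fc.ConsistentSet (C ∪ Dc)) :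
    ∃ Es : List (Set (Atom F P)), IsConstraintSplit fc C Dc Es := by
  obtain ⟨Es, hEs, hproj⟩ := hex C hC hCf (setVars C ∩ setVars Dc)
  obtain ⟨Gs, hGs⟩ := exists_isDisjointDNF_not_exists hneg hEs
  obtain ⟨Hs, hHs, hHs_cons⟩ := (hGs.and (isDisjointDNF_forall_mem hD hDf)).exists_consistent
  refine ⟨Hs, fun E hE => ⟨hHs.subset_con E hE, hHs.finite E hE⟩, fun σ => ?_, hHs_cons,
    hHs.pairwise⟩
  rw [hproj σ]
  exact hHs.iff σ
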